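/- Let (L,Q) be a definite ternary A-lattice with successive minima (μ₁, μ₂, μ₃) and dual lattice L^♯ = {w : B(w,L) ⊆ A}. Then the successive minima of (L^♯, Q) are (−μ₃, −μ₂, −μ₁). -/

import Mathlib

/-
Let `v` be the valuation at infinity, so that `v = exp ∘ deg`. A reduced Gram matrix `M` is
diagonally dominant for `v` in the ultrametric sense: each off-diagonal entry has smaller valuation
than the diagonal entry of its column. Hence in the Leibniz expansions of `det M` and of the
cofactors the diagonal term strictly dominates all others: `v (det M) = ∏ v (M k k)`,
`v (adj M i i) = ∏_{k ≠ i} v (M k k)` and `v (adj M i j)` is strictly smaller for `i ≠ j`. So `M⁻¹`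
is again dominant, with diagonal valuations `v (M i i)⁻¹`, which now decrease; listing the dual
basis in reverse order gives a reduced Gram matrix of `¼ M⁻¹` with degrees `-μ₃, -μ₂, -μ₁`.
-/

open Polynomial FunctionField Matrix

noncomputable section

variable (Fq : Type) [Field Fq] [Fintype Fq] [DecidableEq (RatFunc Fq)]

/-- The canonical ring homomorphism from `Fq(t)` to its completion at infinity. -/
def toInfty : RatFunc Fq →+* RatFunc.CompletionAtInfty Fq :=
  letI := RatFunc.inftyValued Fq
  UniformSpace.Completion.coeRingHom

/-- The quadratic form attached to a Gram matrix. -/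
def Qval (M : Matrix (Fin 3) (Fin 3) (RatFunc Fq)) (v : Fin 3 → RatFunc Fq) : RatFunc Fq :=
  v ⬝ᵥ (M.mulVec v)

/-- A ternary quadratic lattice (Gram matrix over `K = Fq(t)`) is definite if it is
anisotropic over `Fq((1/t))`. -/
def IsDefinite (M : Matrix (Fin 3) (Fin 3) (RatFunc Fq)) : Prop :=
  ∀ w : Fin 3 → RatFunc.CompletionAtInfty Fq, w ⬝ᵥ ((M.map (toInfty Fq)).mulVec w) = 0 → w = 0

/-- Degree of a rational function, with `deg 0 = ⊥`. -/
def degK (x : RatFunc Fq) : WithBot ℤ := if x = 0 then ⊥ else (x.intDegree : WithBot ℤ)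

/-- The Gram matrix of a reduced basis. -/
def IsReducedGram (M : Matrix (Fin 3) (Fin 3) (RatFunc Fq)) : Prop :=
  M.IsSymm ∧ (∀ i j : Fin 3, i ≤ j → degK Fq (M i i) ≤ degK Fq (M j j)) ∧
    ∀ i j : Fin 3, i < j → degK Fq (M i j) < degK Fq (M i i)

/-- The value of the quadratic form at a vector of the lattice `A³`, `A = Fq[t]`. -/
def QA (M : Matrix (Fin 3) (Fin 3) (RatFunc Fq)) (v : Fin 3 → Polynomial Fq) : RatFunc Fq :=
  Qval Fq M (fun i => algebraMap (Polynomial Fq) (RatFunc Fq) (v i))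

/-- Two ternary lattices are isospectral if they have the same representation numbers. -/
def Isospectral (M M' : Matrix (Fin 3) (Fin 3) (RatFunc Fq)) : Prop :=
  ∀ a : RatFunc Fq, Nat.card {v : Fin 3 → Polynomial Fq // QA Fq M v = a}
    = Nat.card {v : Fin 3 → Polynomial Fq // QA Fq M' v = a}

/-- Two ternary lattices are isometric over `A = Fq[t]`. -/
def IsometricA (M M' : Matrix (Fin 3) (Fin 3) (RatFunc Fq)) : Prop :=
  ∃ U : Matrix (Fin 3) (Fin 3) (Polynomial Fq), IsUnit U.det ∧
    (U.map (algebraMap (Polynomial Fq) (RatFunc Fq)))ᵀ * M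
      * (U.map (algebraMap (Polynomial Fq) (RatFunc Fq))) = M'


/-- Gram matrix of the dual lattice `L^♯` of `(A³, M)` in the dual basis. -/
def dualGram (M : Matrix (Fin 3) (Fin 3) (RatFunc Fq)) : Matrix (Fin 3) (Fin 3) (RatFunc Fq) :=
  Matrix.of fun i j => (4 : RatFunc Fq)⁻¹ * (M⁻¹ i j)

namespace Finset

variable {ι Γ₀ : Type*} [LinearOrderedCommGroupWithZero Γ₀] {s : Finset ι} {f g : ι → Γ₀}

lemma prod_lt_prod₀ (hg : ∀ i ∈ s, 0 < g i) (hfg : ∀ i ∈ s, f i ≤ g i)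
    (hlt : ∃ i ∈ s, f i < g i) : ∏ i ∈ s, f i < ∏ i ∈ s, g i := by
  by_cases hf : ∃ i ∈ s, f i = 0
  · rw [prod_eq_zero_iff.2 hf]
    exact prod_pos hg
  · push Not at hf
    exact prod_lt_prod (fun i hi => zero_lt_iff.2 (hf i hi)) hfg hlt

end Finset

lemma Valuation.map_units_int_smul {R Γ₀ : Type*} [Ring R] [LinearOrderedCommGroupWithZero Γ₀]
    (v : Valuation R Γ₀) (u : ℤˣ) (x : R) : v (u • x) = v x := by
  rcases Int.units_eq_one_or u with rfl | rfl <;> simp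

namespace Matrix

open Equiv Finset

lemma transpose_permMatrix_mul_mul_permMatrix {R m : Type*} [CommRing R] [Fintype m]
    [DecidableEq m] (σ : Perm m) (A : Matrix m m R) :
    (σ.permMatrix R)ᵀ * A * σ.permMatrix R = A.submatrix σ.symm σ.symm := by
  rw [transpose_permMatrix, PEquiv.toMatrix_toPEquiv_mul, PEquiv.mul_toMatrix_toPEquiv,
    submatrix_submatrix]
  rfl

section DiagDominant

variable {K Γ₀ n : Type*} [Field K] [LinearOrderedCommGroupWithZero Γ₀] (v : Valuation K Γ₀)

-- The ultrametric analogue of strict column diagonal dominance.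
def IsDiagDominant (A : Matrix n n K) : Prop :=
  ∀ k l, k ≠ l → v (A k l) < v (A l l)

variable {v} {A : Matrix n n K}

namespace IsDiagDominant

lemma valuation_pos (hA : A.IsDiagDominant v) {k l : n} (hkl : k ≠ l) : 0 < v (A l l) :=
  zero_le.trans_lt (hA k l hkl)

lemma prod_valuation_lt (hA : A.IsDiagDominant v) {σ : Perm n} {S : Finset n}
    (hσ : ∃ k ∈ S, σ k ≠ k) : ∏ k ∈ S, v (A (σ k) k) < ∏ k ∈ S, v (A k k) := by
  obtain ⟨k₀, hk₀S, hk₀⟩ := hσ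
  refine prod_lt_prod₀ (fun l _ => ?_) (fun l _ => ?_) ⟨k₀, hk₀S, hA _ _ hk₀⟩
  · by_cases hl : l = k₀
    · exact hA.valuation_pos (hl ▸ hk₀)
    · exact hA.valuation_pos (Ne.symm hl)
  · by_cases hl : σ l = l
    · rw [hl]
    · exact (hA _ _ hl).le

lemma valuation_diag_pos (hA : A.IsDiagDominant v) {i j : n} (hij : i ≠ j) (k : n) :
    0 < v (A k k) := by
  by_cases hk : k = i
  · exact hA.valuation_pos (hk ▸ hij.symm)
  · exact hA.valuation_pos (Ne.symm hk)

end IsDiagDominant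

variable (v) [Fintype n] [DecidableEq n]

lemma prod_updateRow_single_apply (A : Matrix n n K) (i j : n) (σ : Perm n) :
    ∏ k, A.updateRow j (Pi.single i 1) (σ k) k =
      if σ i = j then ∏ k ∈ univ.erase i, A (σ k) k else 0 := by
  rw [← mul_prod_erase univ _ (mem_univ (σ.symm j))]
  have hrest : ∀ k ∈ univ.erase (σ.symm j),
      A.updateRow j (Pi.single i 1) (σ k) k = A (σ k) k := fun k hk =>
    by rw [updateRow_ne (by simpa [eq_symm_apply] using ne_of_mem_erase hk)]
  rw [prod_congr rfl hrest, apply_symm_apply, updateRow_self]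
  by_cases h : σ i = j
  · rw [if_pos h, ← h, symm_apply_apply, Pi.single_eq_same, one_mul]
  · rw [if_neg h, Pi.single_eq_of_ne fun h' => h (by rw [← h', apply_symm_apply]), zero_mul]

lemma valuation_inv_apply (A : Matrix n n K) (i j : n) :
    v (A⁻¹ i j) = (v A.det)⁻¹ * v (A.adjugate i j) := by
  rw [inv_def, smul_apply, smul_eq_mul, Ring.inverse_eq_inv, map_mul, map_inv₀]

variable {v} {A : Matrix n n K}

namespace IsDiagDominant

lemma valuation_det (hA : A.IsDiagDominant v) : v A.det = ∏ k, v (A k k) := by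
  rw [det_apply, v.map_sum_eq_of_lt (mem_univ 1)]
  · simp
  · intro σ hσ
    have : ∃ k ∈ univ, σ k ≠ k := by simpa [Perm.ext_iff] using hσ
    simpa [v.map_units_int_smul] using hA.prod_valuation_lt this

lemma prod_erase_valuation_pos (hA : A.IsDiagDominant v) (i : n) :
    0 < ∏ k ∈ univ.erase i, v (A k k) :=
  prod_pos fun _ hk => hA.valuation_pos (ne_of_mem_erase hk).symm

-- The `σ`-term of the Leibniz expansion of `adjugate A i j = det (A.updateRow j (Pi.single i 1))`
-- vanishes unless `σ i = j`; then some `k ≠ i` is moved by `σ`, and column `k` gives strictness.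
lemma valuation_adjugate_term_lt (hA : A.IsDiagDominant v) {i j : n} {σ : Perm n}
    (h : σ ≠ 1 ∨ i ≠ j) :
    v (∏ k, A.updateRow j (Pi.single i 1) (σ k) k) < ∏ k ∈ univ.erase i, v (A k k) := by
  rw [prod_updateRow_single_apply]
  split_ifs with hσi
  · rw [map_prod]
    apply hA.prod_valuation_lt
    by_cases hij : i = j
    · subst hij
      obtain ⟨k, hk⟩ : ∃ k, σ k ≠ k := by simpa [Perm.ext_iff] using h
      exact ⟨k, mem_erase.2 ⟨fun hki => hk (hki ▸ hσi), mem_univ k⟩, hk⟩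
    · have hfix : σ.symm i ≠ i := fun h' => hij (((σ.symm_apply_eq).1 h').trans hσi)
      exact ⟨σ.symm i, mem_erase.2 ⟨hfix, mem_univ _⟩, by rw [apply_symm_apply]; exact hfix.symm⟩
  · rw [v.map_zero]
    exact hA.prod_erase_valuation_pos i

lemma valuation_adjugate_apply_self (hA : A.IsDiagDominant v) (i : n) :
    v (A.adjugate i i) = ∏ k ∈ univ.erase i, v (A k k) := by
  have hone : v (∏ k, A.updateRow i (Pi.single i 1) ((1 : Perm n) k) k) =
      ∏ k ∈ univ.erase i, v (A k k) := by
    rw [prod_updateRow_single_apply, if_pos (Perm.one_apply i), map_prod]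
    rfl
  rw [adjugate_apply, det_apply, v.map_sum_eq_of_lt (mem_univ 1)]
  · rw [v.map_units_int_smul, hone]
  · intro σ hσ
    rw [v.map_units_int_smul, v.map_units_int_smul, hone]
    exact hA.valuation_adjugate_term_lt (Or.inl (by simpa using hσ))

lemma valuation_adjugate_apply_lt (hA : A.IsDiagDominant v) {i j : n} (hij : i ≠ j) :
    v (A.adjugate i j) < ∏ k ∈ univ.erase i, v (A k k) := by
  rw [adjugate_apply, det_apply]
  refine v.map_sum_lt (hA.prod_erase_valuation_pos i).ne' fun σ _ => ?_
  rw [v.map_units_int_smul]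
  exact hA.valuation_adjugate_term_lt (Or.inr hij)

lemma valuation_inv_apply_self (hA : A.IsDiagDominant v) (i : n) :
    v (A⁻¹ i i) = (v (A i i))⁻¹ := by
  rw [valuation_inv_apply, hA.valuation_det, hA.valuation_adjugate_apply_self,
    ← mul_prod_erase univ _ (mem_univ i), mul_inv, mul_assoc,
    inv_mul_cancel₀ (hA.prod_erase_valuation_pos i).ne', mul_one]

lemma valuation_inv_apply_lt (hA : A.IsDiagDominant v) {i j : n} (hij : i ≠ j) :
    v (A⁻¹ i j) < v (A⁻¹ i i) := by
  rw [valuation_inv_apply, valuation_inv_apply, hA.valuation_adjugate_apply_self]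
  refine mul_lt_mul_of_pos_left (hA.valuation_adjugate_apply_lt hij) (inv_pos.2 ?_)
  rw [hA.valuation_det]
  exact prod_pos fun k _ => hA.valuation_diag_pos hij k

end IsDiagDominant

end DiagDominant

section Reduced

variable {K Γ₀ : Type*} [Field K] [LinearOrderedCommGroupWithZero Γ₀] {n : ℕ}

def IsReduced (v : Valuation K Γ₀) (M : Matrix (Fin n) (Fin n) K) : Prop :=
  M.IsSymm ∧ Monotone (fun i => v (M i i)) ∧ ∀ i j, i < j → v (M i j) < v (M i i)

variable {v : Valuation K Γ₀} {M : Matrix (Fin n) (Fin n) K}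

namespace IsReduced

lemma isDiagDominant (hM : M.IsReduced v) : M.IsDiagDominant v := by
  obtain ⟨hsymm, hmono, hlt⟩ := hM
  intro k l hkl
  rcases hkl.lt_or_gt with h | h
  · exact (hlt k l h).trans_le (hmono h.le)
  · rw [hsymm.apply]
    exact hlt l k h

lemma smul (hM : M.IsReduced v) {c : K} (hc : c ≠ 0) : (c • M).IsReduced v := by
  have hvc : 0 < v c := zero_lt_iff.2 ((v.ne_zero_iff).2 hc)
  obtain ⟨hsymm, hmono, hlt⟩ := hM
  refine ⟨hsymm.smul c, fun i j hij => ?_, fun i j hij => ?_⟩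
  · simp only [smul_apply, smul_eq_mul, map_mul]
    exact mul_le_mul_of_nonneg_left (hmono hij) zero_le
  · simp only [smul_apply, smul_eq_mul, map_mul]
    exact mul_lt_mul_of_pos_left (hlt i j hij) hvc

lemma inv_submatrix_rev (hM : M.IsReduced v) : (M⁻¹.submatrix Fin.rev Fin.rev).IsReduced v := by
  have hA := hM.isDiagDominant
  refine ⟨hM.1.inv.submatrix _, fun i j hij => ?_, fun i j hij => ?_⟩
  · rcases hij.eq_or_lt with rfl | hlt
    · rfl
    have hne : Fin.rev i ≠ Fin.rev j := Fin.rev_injective.ne hlt.ne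
    simp only [submatrix_apply, hA.valuation_inv_apply_self]
    exact (inv_le_inv₀ (hA.valuation_diag_pos hne _) (hA.valuation_diag_pos hne _)).2
      (hM.2.1 (Fin.rev_le_rev.2 hij))
  · exact hA.valuation_inv_apply_lt (Fin.rev_injective.ne hij.ne)

end IsReduced

end Reduced

end Matrix

section RatFunc

variable {F : Type} [Field F]

lemma dualGram_eq_smul_inv (M : Matrix (Fin 3) (Fin 3) (RatFunc F)) :
    dualGram F M = (4 : RatFunc F)⁻¹ • M⁻¹ :=
  rfl

variable [DecidableEq (RatFunc F)]

lemma RatFunc.intDegree_eq_neg_of_inftyValuation_eq_inv {x y : RatFunc F} (hy : y ≠ 0)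
    (h : inftyValuation F x = (inftyValuation F y)⁻¹) : x.intDegree = -y.intDegree := by
  have hx : x ≠ 0 := by
    rintro rfl
    rw [map_zero, eq_comm, inv_eq_zero, Valuation.zero_iff] at h
    exact hy h
  rw [inftyValuation_apply, inftyValuation_apply, inftyValuation_of_nonzero F hx,
    inftyValuation_of_nonzero F hy, ← WithZero.exp_neg] at h
  exact WithZero.exp_inj.1 h

lemma degK_eq_toAdd_inftyValuation (x : RatFunc F) :
    degK F x = Multiplicative.toAdd (WithZero.toMulBot (RatFunc.inftyValuation F x)) := by
  by_cases hx : x = 0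
  · simp [degK, hx]
  · rw [degK, if_neg hx, RatFunc.inftyValuation_apply, RatFunc.inftyValuation_of_nonzero F hx]
    rfl

lemma degK_le_degK_iff {x y : RatFunc F} :
    degK F x ≤ degK F y ↔ RatFunc.inftyValuation F x ≤ RatFunc.inftyValuation F y := by
  simp only [degK_eq_toAdd_inftyValuation, Multiplicative.toAdd_le, WithZero.toMulBot_le]

lemma degK_lt_degK_iff {x y : RatFunc F} :
    degK F x < degK F y ↔ RatFunc.inftyValuation F x < RatFunc.inftyValuation F y := by
  simp only [degK_eq_toAdd_inftyValuation, Multiplicative.toAdd_lt, WithZero.toMulBot_lt]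

lemma isReducedGram_iff_isReduced {M : Matrix (Fin 3) (Fin 3) (RatFunc F)} :
    IsReducedGram F M ↔ M.IsReduced (RatFunc.inftyValuation F) := by
  simp only [IsReducedGram, degK_le_degK_iff, degK_lt_degK_iff]
  rfl

lemma inftyValuation_four [Fintype F] (hodd : Odd (Fintype.card F)) :
    RatFunc.inftyValuation F 4 = 1 := by
  have hchar : ringChar F ≠ 2 := fun h =>
    Nat.not_even_iff_odd.2 hodd (Nat.even_iff.2 (FiniteField.even_card_of_char_two h))
  have h4 : (4 : F) ≠ 0 := by
    rw [show (4 : F) = 2 ^ 2 by norm_num]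
    exact pow_ne_zero 2 (Ring.two_ne_zero hchar)
  rw [← map_ofNat RatFunc.C 4]
  exact RatFunc.inftyValuation.C F h4

end RatFunc

theorem stmt_8 (hodd : Odd (Fintype.card Fq))
    (M : Matrix (Fin 3) (Fin 3) (RatFunc Fq))
    (hred : IsReducedGram Fq M) :
    ∃ U : Matrix (Fin 3) (Fin 3) (Polynomial Fq), IsUnit U.det ∧
      IsReducedGram Fq
        ((U.map (algebraMap (Polynomial Fq) (RatFunc Fq)))ᵀ * dualGram Fq M
          * (U.map (algebraMap (Polynomial Fq) (RatFunc Fq)))) ∧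
      ∀ i : Fin 3,
        (((U.map (algebraMap (Polynomial Fq) (RatFunc Fq)))ᵀ * dualGram Fq M
          * (U.map (algebraMap (Polynomial Fq) (RatFunc Fq)))) i i).intDegree
          = -((M (2 - i) (2 - i)).intDegree) := by
  have hM : M.IsReduced (RatFunc.inftyValuation Fq) := isReducedGram_iff_isReduced.1 hred
  have h4 : RatFunc.inftyValuation Fq 4 = 1 := inftyValuation_four hodd
  have hconj : ((Fin.revPerm.permMatrix (Polynomial Fq)).map
      (algebraMap (Polynomial Fq) (RatFunc Fq)))ᵀ * dualGram Fq M *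
      (Fin.revPerm.permMatrix (Polynomial Fq)).map (algebraMap (Polynomial Fq) (RatFunc Fq)) =
      ((4 : RatFunc Fq)⁻¹ • M⁻¹).submatrix Fin.rev Fin.rev := by
    rw [PEquiv.map_toMatrix, transpose_permMatrix_mul_mul_permMatrix, Fin.revPerm_symm,
      dualGram_eq_smul_inv]
    rfl
  refine ⟨Fin.revPerm.permMatrix _, ?_, ?_, fun i => ?_⟩
  · rw [det_permutation]
    exact (Equiv.Perm.sign _).isUnit.map (Int.castRingHom _)
  · rw [hconj, submatrix_smul, isReducedGram_iff_isReduced]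
    exact hM.inv_submatrix_rev.smul (inv_ne_zero fun h => by simp [h] at h4)
  · have hdiag : M (Fin.rev i) (Fin.rev i) ≠ 0 := (Valuation.ne_zero_iff _).1
      (hM.isDiagDominant.valuation_diag_pos (i := 0) (j := 1) (by decide) _).ne'
    rw [hconj, show (2 : Fin 3) - i = Fin.rev i from Fin.last_sub i]
    refine RatFunc.intDegree_eq_neg_of_inftyValuation_eq_inv hdiag ?_
    rw [submatrix_apply, Matrix.smul_apply, smul_eq_mul, map_mul, map_inv₀, h4, inv_one, one_mul,
      hM.isDiagDominant.valuation_inv_apply_self]
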